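/- Let q : ℝᵈ → ℝ be a smooth function with |∇q| ≠ 0 solving −∇V·∇q + β⁻¹Δq = 0 on an open set Ω, where V is smooth. Then for any smooth compactly supported f : ℝᵈ → ℝ, the function I(r) = ∫_{{q = r}} f e^{−βV} |∇q|² δ_{q(x)−r}(dx) = ∫_{{q=r}} f e^{−βV} |∇q| dσ is constant in r on the range of q corresponding to level sets contained in Ω, provided additionally ∇f·∇q ≡ 0-weighted integral vanishes; specifically I'(r) = ∫_{{q=r}} div(f e^{−βV} ∇q) δ_{q(x)−r}(dx) = ∫_{{q=r}} (∇f·∇q) e^{−βV} δ_{q(x)−r}(dx). -/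

import Mathlib

open MeasureTheory InnerProductSpace

/-- Divergence of a vector field on `EuclideanSpace ℝ (Fin d)`. -/
noncomputable def diverg {d : ℕ}
    (g : EuclideanSpace ℝ (Fin d) → EuclideanSpace ℝ (Fin d))
    (x : EuclideanSpace ℝ (Fin d)) : ℝ :=
  ∑ i : Fin d, fderiv ℝ g x (EuclideanSpace.single i 1) i

lemma inner_gradient_eq {d : ℕ} (c : EuclideanSpace ℝ (Fin d) → ℝ)
    (x v : EuclideanSpace ℝ (Fin d)) :
    (inner ℝ (gradient c x) v : ℝ) = fderiv ℝ c x v := by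
  simpa [gradient] using (toDual_symm_apply (𝕜 := ℝ) (E := EuclideanSpace ℝ (Fin d))
    (y := fderiv ℝ c x) (x := v))

lemma gradient_contDiff {d : ℕ} (q : EuclideanSpace ℝ (Fin d) → ℝ)
    (hq : ContDiff ℝ (⊤ : ℕ∞) q) : ContDiff ℝ (⊤ : ℕ∞) (gradient q) := by
  have : gradient q = fun x => (toDual ℝ (EuclideanSpace ℝ (Fin d))).symm (fderiv ℝ q x) := rfl
  rw [this]
  exact ((toDual ℝ (EuclideanSpace ℝ (Fin d))).symm.contDiff).comp (hq.fderiv_right (by simp))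

lemma diverg_smul {d : ℕ} (c : EuclideanSpace ℝ (Fin d) → ℝ)
    (w : EuclideanSpace ℝ (Fin d) → EuclideanSpace ℝ (Fin d))
    (x : EuclideanSpace ℝ (Fin d))
    (hc : DifferentiableAt ℝ c x) (hw : DifferentiableAt ℝ w x) :
    diverg (fun y => c y • w y) x = (inner ℝ (gradient c x) (w x) : ℝ) + c x * diverg w x := by
  have hfd : fderiv ℝ (fun y => c y • w y) x
      = c x • fderiv ℝ w x + (fderiv ℝ c x).smulRight (w x) := fderiv_smul hc hw
  have hsum : ∀ i : Fin d, fderiv ℝ (fun y => c y • w y) x (EuclideanSpace.single i 1) i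
      = c x * fderiv ℝ w x (EuclideanSpace.single i 1) i
        + fderiv ℝ c x (EuclideanSpace.single i 1) * w x i := by
    intro i
    rw [hfd]
    simp [ContinuousLinearMap.smulRight_apply, mul_comm]
  have hinner : (inner ℝ (gradient c x) (w x) : ℝ)
      = ∑ i : Fin d, fderiv ℝ c x (EuclideanSpace.single i 1) * w x i := by
    rw [PiLp.inner_apply]
    refine Finset.sum_congr rfl fun i _ => ?_
    have : fderiv ℝ c x (EuclideanSpace.single i 1) = gradient c x i := by
      rw [← inner_gradient_eq]
      rw [EuclideanSpace.inner_single_right]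
      simp
    rw [this]
    simp [RCLike.inner_apply, mul_comm]
  simp only [diverg, hsum, Finset.sum_add_distrib, hinner, Finset.mul_sum]
  ring

/-- Derivative of level-set integrals: let `q` be smooth with nonvanishing
gradient solving `-∇V·∇q + β⁻¹ Δq = 0` on an open set `Ω`, and let `δ r` be the
measures `|∇q|⁻¹ dσ_{{q=r}}` on the level sets, satisfying the co-area
derivative identity `(d/dr) ∫ ψ dδ_r = ∫ div(ψ ∇q |∇q|⁻²) dδ_r` for smooth
compactly supported `ψ`. Then for smooth compactly supported `f`, the function
`I(r) = ∫ f e^{-βV} |∇q|² dδ_r` satisfies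
`I'(r) = ∫ div(f e^{-βV} ∇q) dδ_r = ∫ (∇f·∇q) e^{-βV} dδ_r`
for every `r` whose level set is contained in `Ω`. -/
theorem level_set_integral_deriv {d : ℕ}
    (V q f : EuclideanSpace ℝ (Fin d) → ℝ)
    (hV : ContDiff ℝ (⊤ : ℕ∞) V) (hq : ContDiff ℝ (⊤ : ℕ∞) q) (hf : ContDiff ℝ (⊤ : ℕ∞) f)
    (hfsupp : HasCompactSupport f)
    (hgrad : ∀ x, gradient q x ≠ 0)
    (β : ℝ) (hβ : 0 < β)
    (Ω : Set (EuclideanSpace ℝ (Fin d))) (hΩ : IsOpen Ω)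
    (hpde : ∀ x ∈ Ω, -(inner ℝ (gradient V x) (gradient q x) : ℝ) +
      β⁻¹ * diverg (gradient q) x = 0)
    (δ : ℝ → Measure (EuclideanSpace ℝ (Fin d)))
    (hδsupp : ∀ r : ℝ, ∀ᵐ x ∂(δ r), q x = r)
    (hcoarea : ∀ (ψ : EuclideanSpace ℝ (Fin d) → ℝ), ContDiff ℝ (⊤ : ℕ∞) ψ →
      HasCompactSupport ψ → ∀ r : ℝ,
      HasDerivAt (fun s => ∫ x, ψ x ∂(δ s))
        (∫ x, diverg
          (fun y => ψ y • ((‖gradient q y‖ ^ 2)⁻¹ • gradient q y)) x ∂(δ r)) r) :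
    ∀ r : ℝ, {x | q x = r} ⊆ Ω →
      HasDerivAt
        (fun s => ∫ x, f x * Real.exp (-β * V x) * ‖gradient q x‖ ^ 2 ∂(δ s))
        (∫ x, diverg (fun y => (f y * Real.exp (-β * V y)) • gradient q y) x
          ∂(δ r)) r ∧
      (∫ x, diverg (fun y => (f y * Real.exp (-β * V y)) • gradient q y) x
          ∂(δ r)) =
        ∫ x, (inner ℝ (gradient f x) (gradient q x) : ℝ) *
          Real.exp (-β * V x) ∂(δ r) := by
  intro r hsub
  have hgq : ContDiff ℝ (⊤ : ℕ∞) (gradient q) := gradient_contDiff q hq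
  have hexp : ContDiff ℝ (⊤ : ℕ∞) (fun y => Real.exp (-β * V y)) :=
    Real.contDiff_exp.comp (contDiff_const.mul hV)
  have hnormsq : ∀ y, ‖gradient q y‖ ^ 2 ≠ 0 := fun y => by
    simpa using hgrad y
  constructor
  · -- part 1
    have hψ : ContDiff ℝ (⊤ : ℕ∞)
        (fun x => f x * Real.exp (-β * V x) * ‖gradient q x‖ ^ 2) :=
      (hf.mul hexp).mul (hgq.norm_sq ℝ)
    have hψsupp : HasCompactSupport
        (fun x => f x * Real.exp (-β * V x) * ‖gradient q x‖ ^ 2) :=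
      (hfsupp.mul_right).mul_right
    have h := hcoarea _ hψ hψsupp r
    have hfun : (fun y => (f y * Real.exp (-β * V y) * ‖gradient q y‖ ^ 2) •
        ((‖gradient q y‖ ^ 2)⁻¹ • gradient q y))
        = fun y => (f y * Real.exp (-β * V y)) • gradient q y := by
      funext y
      rw [smul_smul]
      congr 1
      exact mul_inv_cancel_right₀ (hnormsq y) _
    rwa [hfun] at h
  · -- part 2
    refine integral_congr_ae ?_
    filter_upwards [hδsupp r] with x hx
    have hxΩ : x ∈ Ω := hsub hx
    have hc : DifferentiableAt ℝ (fun y => f y * Real.exp (-β * V y)) x :=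
      ((hf.mul hexp).differentiable (by simp)) x
    have hds := diverg_smul (fun y => f y * Real.exp (-β * V y)) (gradient q) x hc
      ((hgq.differentiable (by simp)) x)
    rw [hds, inner_gradient_eq]
    have hfderiv_mul : fderiv ℝ (fun y => f y * Real.exp (-β * V y)) x
        = f x • fderiv ℝ (fun y => Real.exp (-β * V y)) x
          + Real.exp (-β * V x) • fderiv ℝ f x :=
      fderiv_mul ((hf.differentiable (by simp)) x) ((hexp.differentiable (by simp)) x)
    have hfderiv_exp : fderiv ℝ (fun y => Real.exp (-β * V y)) x
        = Real.exp (-β * V x) • ((-β) • fderiv ℝ V x) := by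
      rw [fderiv_exp (((contDiff_const.mul hV).differentiable (by simp)) x)]
      congr 1
      exact fderiv_const_mul ((hV.differentiable (by simp)) x) (-β)
    have hV' : fderiv ℝ V x (gradient q x) = (inner ℝ (gradient V x) (gradient q x) : ℝ) :=
      (inner_gradient_eq V x (gradient q x)).symm
    have hf' : fderiv ℝ f x (gradient q x) = (inner ℝ (gradient f x) (gradient q x) : ℝ) :=
      (inner_gradient_eq f x (gradient q x)).symm
    have hDq : diverg (gradient q) x = β * (inner ℝ (gradient V x) (gradient q x) : ℝ) := by
      have h0 := hpde x hxΩ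
      have h1 : β⁻¹ * diverg (gradient q) x
          = (inner ℝ (gradient V x) (gradient q x) : ℝ) := by linarith
      rw [← h1]
      field_simp
    rw [hfderiv_mul]
    simp only [ContinuousLinearMap.add_apply, ContinuousLinearMap.smul_apply,
      hfderiv_exp, hV', hf', hDq, smul_eq_mul]
    ring
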